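/- arXiv:1309.5751 — 3 statements merged into one kernel-verified Lean document; each statement's English description precedes it below -/
import Mathlib

section
/- Let K be a valued difference field, F a σ-polynomial over K, and a, b ∈ K with v(b − a) > v(a). Then a is regular for F if and only if b is regular for F. -/
noncomputable section
open scoped Classical

/-- A valued difference field: a valued field `(K, v)` with value group `Γ`
(additive, `v : K → WithTop Γ`, `v 0 = ⊤`), together with a distinguished field
automorphism `σ` fixing the valuation ring setwise; `σΓ` is the induced
order-preserving automorphism of the value group. -/
structure VDF (K : Type*) [Field K] (Γ : Type*) [AddCommGroup Γ] [LinearOrder Γ] [IsOrderedAddMonoid Γ] where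
  v : K → WithTop Γ
  σ : K ≃+* K
  σΓ : Γ ≃o Γ
  v_eq_top_iff : ∀ x : K, v x = ⊤ ↔ x = 0
  v_one : v 1 = 0
  v_mul : ∀ x y : K, v (x * y) = v x + v y
  v_neg : ∀ x : K, v (-x) = v x
  v_add : ∀ x y : K, min (v x) (v y) ≤ v (x + y)
  v_sigma : ∀ x : K, v (σ x) = WithTop.map σΓ (v x)

namespace VDF

variable {K : Type*} [Field K] {Γ : Type*} [AddCommGroup Γ] [LinearOrder Γ] [IsOrderedAddMonoid Γ]

/-- A σ-polynomial of order `≤ n - 1` over `K` is encoded as an ordinary polynomial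
`P` in the variables `X 0, …, X (n-1)`; its value at `a` is obtained by substituting
`σ^k(a)` for `X k`. -/
def sEval (V : VDF K Γ) {n : ℕ} (P : MvPolynomial (Fin n) K) (a : K) : K :=
  MvPolynomial.eval (fun k : Fin n => (⇑V.σ)^[(k : ℕ)] a) P

/-- `σ^i(γ) = Σ_k i_k σ^k(γ)` for a multi-index `i`. -/
def sigmaIdx (V : VDF K Γ) {n : ℕ} (i : Fin n →₀ ℕ) (γ : Γ) : Γ :=
  ∑ k : Fin n, (i k) • (⇑V.σΓ)^[(k : ℕ)] γ

/-- `F_v(γ) = min_i (v(a_i) + σ^i(γ))`, the minimum over the monomials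
(support) of the σ-polynomial `P` with coefficients `a_i`. -/
def Fv (V : VDF K Γ) {n : ℕ} (P : MvPolynomial (Fin n) K) (γ : Γ) : WithTop Γ :=
  P.support.inf fun i => V.v (MvPolynomial.coeff i P) + (V.sigmaIdx i γ : WithTop Γ)

/-- The norm `|j| = Σ_k j_k` of a multi-index. -/
def degSum {n : ℕ} (j : Fin n →₀ ℕ) : ℕ := j.sum fun _ m => m

/-- The formal Taylor coefficient (Hasse derivative) `P_(j)` of a σ-polynomial `P`,
so that `P(y + x) = Σ_j P_(j)(y) σ(x)^j`. -/
def hasse {n : ℕ} (P : MvPolynomial (Fin n) K) (j : Fin n →₀ ℕ) :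
    MvPolynomial (Fin n) K :=
  MvPolynomial.coeff j
    (MvPolynomial.bind₁
      (fun k => (MvPolynomial.C (MvPolynomial.X k) + MvPolynomial.X k :
        MvPolynomial (Fin n) (MvPolynomial (Fin n) K)))
      (MvPolynomial.map MvPolynomial.C P))

/-- `(G, a)` is in σ-hensel configuration with associated `γ`. -/
def InSHC (V : VDF K Γ) {n : ℕ} (P : MvPolynomial (Fin (n + 1)) K) (a : K) (γ : Γ) :
    Prop :=
  (∃ i ∈ P.support, i ≠ 0) ∧
  (∃ i : Fin (n + 1) →₀ ℕ, degSum i = 1 ∧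
      V.v (V.sEval P a) =
        V.v (V.sEval (hasse P i) a) + (V.sigmaIdx i γ : WithTop Γ)) ∧
  (∀ j : Fin (n + 1) →₀ ℕ, degSum j = 1 →
      V.v (V.sEval P a) ≤ V.v (V.sEval (hasse P j) a) + (V.sigmaIdx j γ : WithTop Γ)) ∧
  (∀ j l : Fin (n + 1) →₀ ℕ, j ≠ 0 → l ≠ 0 → hasse P j ≠ 0 →
      V.v (V.sEval (hasse P j) a) + (V.sigmaIdx j γ : WithTop Γ) <
        V.v (V.sEval (hasse P (j + l)) a) + (V.sigmaIdx (j + l) γ : WithTop Γ))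

/-- The residue field has characteristic zero. -/
def resChar0 (V : VDF K Γ) : Prop := ∀ m : ℕ, 0 < m → V.v (m : K) = 0

/-- Axiom 2: the residue difference field is linear difference closed, phrased at the
level of `K`: for `a_0, …, a_m` in the valuation ring, with some `a_i` a unit, the
equation `1 + Σ_i ā_i σ̄^i(x) = 0` has a solution in the residue field. -/
def axiom2 (V : VDF K Γ) : Prop :=
  ∀ (m : ℕ) (a : Fin (m + 1) → K), (∀ i, 0 ≤ V.v (a i)) → (∃ i, V.v (a i) = 0) →
    ∃ u : K, 0 ≤ V.v u ∧ 0 < V.v (1 + ∑ i : Fin (m + 1), a i * (⇑V.σ)^[(i : ℕ)] u)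

/-- σ-henselianity. -/
def sigmaHenselian (V : VDF K Γ) : Prop :=
  ∀ (n : ℕ) (P : MvPolynomial (Fin (n + 1)) K) (a : K) (γ : Γ),
    V.InSHC P a γ → ∃ b : K, V.v (b - a) = (γ : WithTop Γ) ∧ V.sEval P b = 0

/-- `s` is a pseudo-Cauchy sequence. -/
def IsPC (V : VDF K Γ) {I : Type*} [LinearOrder I] (s : I → K) : Prop :=
  ∃ i0 : I, ∀ i j k : I, i0 ≤ i → i < j → j < k → V.v (s j - s i) < V.v (s k - s j)

/-- `x` is a pseudolimit of `s`, i.e. `v (x - s ρ)` is eventually strictly increasing. -/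
def Plim (V : VDF K Γ) {I : Type*} [LinearOrder I] (s : I → K) (x : K) : Prop :=
  ∃ i0 : I, ∀ i j : I, i0 ≤ i → i < j → V.v (x - s i) < V.v (x - s j)

/-- Equivalence of pc-sequences: they have the same pseudolimits. -/
def EquivPC (V : VDF K Γ) {I : Type*} [LinearOrder I] (s t : I → K) : Prop :=
  ∀ x : K, V.Plim s x ↔ V.Plim t x

/-- Axiom 1 for a difference subfield `E` of `K`: the induced automorphism of the
residue field of `E` is of infinite order, phrased at the level of `E`:
for each `d > 0` there is `y` in the valuation ring of `E` with
`σ̄^d(ȳ) ≠ ȳ`, i.e. `v (σ^d y - y) = 0`. -/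
def axiom1On (V : VDF K Γ) (E : Subfield K) : Prop :=
  ∀ d : ℕ, 0 < d → ∃ y ∈ E, 0 ≤ V.v y ∧ V.v ((⇑V.σ)^[d] y - y) = 0

end VDF

/-!
Write `b = a * u` with `v (u - 1) > 0`. Such principal units form a monoid stable under `σ`,
so `σ(b)^i = σ(a)^i σ(u)^i` with `σ(u)^i` again a principal unit, whence
`v (c_i σ(b)^i - c_i σ(a)^i) > v c_i + σ^i(γ) ≥ F_v(γ)` for every monomial. Summing,
`v (F(b) - F(a)) > F_v(γ)`, and by the ultrametric inequality `v (F(a))` and `v (F(b))`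
then coincide as soon as one of them equals `F_v(γ)`.
-/

namespace VDF

variable {K : Type*} [Field K] {Γ : Type*} [AddCommGroup Γ] [LinearOrder Γ]
  [IsOrderedAddMonoid Γ] (V : VDF K Γ)

def toAddValuation : AddValuation K (WithTop Γ) :=
  AddValuation.of V.v ((V.v_eq_top_iff 0).2 rfl) V.v_one V.v_add V.v_mul

@[simp]
lemma toAddValuation_apply (x : K) : V.toAddValuation x = V.v x := rfl

lemma v_ne_top_iff {x : K} : V.v x ≠ ⊤ ↔ x ≠ 0 := V.toAddValuation.ne_top_iff

lemma v_prod {ι : Type*} (s : Finset ι) (f : ι → K) :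
    V.v (∏ k ∈ s, f k) = ∑ k ∈ s, V.v (f k) := by
  classical
  induction s using Finset.induction with
  | empty => exact V.v_one
  | insert k s hks ih => rw [Finset.prod_insert hks, Finset.sum_insert hks, V.v_mul, ih]

lemma v_eq_iff_of_lt_v_sub {x y : K} {c : WithTop Γ} (h : c < V.v (y - x)) :
    V.v x = c ↔ V.v y = c := by
  constructor
  · rintro rfl
    exact V.toAddValuation.map_eq_of_lt_sub h
  · rintro rfl
    rw [← V.v_neg (y - x), neg_sub] at h
    exact V.toAddValuation.map_eq_of_lt_sub h

lemma coe_lt_v_mul_iff {x y : K} {γ : Γ} (hx : V.v x = γ) :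
    (γ : WithTop Γ) < V.v (x * y) ↔ 0 < V.v y := by
  rw [V.v_mul, hx]
  simpa using WithTop.add_lt_add_iff_left (x := (γ : WithTop Γ)) (y := 0) WithTop.coe_ne_top

lemma sigmaΓ_zero : V.σΓ 0 = 0 := by
  have h := V.v_sigma 1
  rw [map_one, V.v_one] at h
  exact (WithTop.coe_injective h).symm

def principalUnits : Submonoid K where
  carrier := {u | 0 < V.v (u - 1)}
  one_mem' := by simp [(V.v_eq_top_iff 0).2 rfl]
  mul_mem' {u w} hu hw := by
    have hu1 : V.v u = 0 := by
      rw [← V.v_one] at hu ⊢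
      exact V.toAddValuation.map_eq_of_lt_sub hu
    have : u * w - 1 = u * (w - 1) + (u - 1) := by ring
    simp only [Set.mem_ofPred_eq, this]
    exact V.toAddValuation.map_lt_add (by simpa [V.v_mul, hu1] using hw) hu

lemma mem_principalUnits {u : K} : u ∈ V.principalUnits ↔ 0 < V.v (u - 1) := Iff.rfl

lemma mapsTo_sigma_principalUnits :
    Set.MapsTo V.σ V.principalUnits V.principalUnits := by
  intro u hu
  rw [SetLike.mem_coe, mem_principalUnits] at hu ⊢
  rw [← map_one V.σ, ← map_sub, V.v_sigma]
  cases hv : V.v (u - 1) with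
  | top => exact WithTop.coe_lt_top 0
  | coe g =>
    rw [hv, WithTop.coe_pos] at hu
    rw [WithTop.map_coe, WithTop.coe_pos, ← V.sigmaΓ_zero]
    exact V.σΓ.lt_iff_lt.2 hu

def sMonomial {n : ℕ} (i : Fin n →₀ ℕ) (x : K) : K :=
  ∏ k : Fin n, ((⇑V.σ)^[k] x) ^ i k

lemma sEval_eq_sum {n : ℕ} (P : MvPolynomial (Fin n) K) (x : K) :
    V.sEval P x = ∑ i ∈ P.support, MvPolynomial.coeff i P * V.sMonomial i x :=
  MvPolynomial.eval_eq' _ _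

lemma sMonomial_mul {n : ℕ} (i : Fin n →₀ ℕ) (x y : K) :
    V.sMonomial i (x * y) = V.sMonomial i x * V.sMonomial i y := by
  simp only [sMonomial, iterate_map_mul, mul_pow, Finset.prod_mul_distrib]

lemma sMonomial_mem_principalUnits {n : ℕ} (i : Fin n →₀ ℕ) {u : K}
    (hu : u ∈ V.principalUnits) : V.sMonomial i u ∈ V.principalUnits :=
  Submonoid.prod_mem _ fun k _ => pow_mem (V.mapsTo_sigma_principalUnits.iterate k hu) _

lemma v_iterate_sigma {x : K} {γ : Γ} (hx : V.v x = γ) (k : ℕ) :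
    V.v ((⇑V.σ)^[k] x) = ((⇑V.σΓ)^[k] γ : Γ) := by
  induction k with
  | zero => exact hx
  | succ k ih =>
    rw [Function.iterate_succ_apply', V.v_sigma, ih, Function.iterate_succ_apply', WithTop.map_coe]

lemma v_sMonomial {n : ℕ} (i : Fin n →₀ ℕ) {x : K} {γ : Γ} (hx : V.v x = γ) :
    V.v (V.sMonomial i x) = V.sigmaIdx i γ := by
  simp only [sMonomial, sigmaIdx, v_prod, WithTop.coe_sum, WithTop.coe_nsmul]
  refine Finset.sum_congr rfl fun k _ => ?_
  rw [← V.v_iterate_sigma hx]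
  exact V.toAddValuation.map_pow _ _

lemma sigmaIdx_lt_v_sMonomial_sub {n : ℕ} (i : Fin n →₀ ℕ) {a b : K} {γ : Γ}
    (ha : V.v a = γ) (hab : V.v a < V.v (b - a)) :
    (V.sigmaIdx i γ : WithTop Γ) < V.v (V.sMonomial i b - V.sMonomial i a) := by
  have ha0 : a ≠ 0 := V.v_ne_top_iff.1 (ha ▸ WithTop.coe_ne_top)
  have hu : b / a ∈ V.principalUnits := by
    rw [mem_principalUnits, ← V.coe_lt_v_mul_iff ha, mul_sub, mul_div_cancel₀ _ ha0, mul_one,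
      ← ha]
    exact hab
  have hb : b = a * (b / a) := (mul_div_cancel₀ _ ha0).symm
  rw [hb, sMonomial_mul, ← mul_sub_one, V.coe_lt_v_mul_iff (V.v_sMonomial i ha)]
  exact V.sMonomial_mem_principalUnits i hu

lemma Fv_lt_v_sEval_sub {n : ℕ} {P : MvPolynomial (Fin n) K} (hP : P ≠ 0) {a b : K} {γ : Γ}
    (ha : V.v a = γ) (hab : V.v a < V.v (b - a)) :
    V.Fv P γ < V.v (V.sEval P b - V.sEval P a) := by
  have hc : ∀ i ∈ P.support, V.v (MvPolynomial.coeff i P) ≠ ⊤ := fun i hi =>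
    V.v_ne_top_iff.2 (MvPolynomial.mem_support_iff.1 hi)
  obtain ⟨j, hj⟩ := MvPolynomial.support_nonempty.2 hP
  have hFv : V.Fv P γ < ⊤ :=
    (Finset.inf_le hj).trans_lt (WithTop.add_lt_top.2 ⟨(hc j hj).lt_top, WithTop.coe_lt_top _⟩)
  rw [sEval_eq_sum, sEval_eq_sum, ← Finset.sum_sub_distrib]
  refine V.toAddValuation.map_lt_sum' hFv fun i hi => ?_
  rw [toAddValuation_apply, ← mul_sub, V.v_mul]
  calc V.Fv P γ ≤ V.v (MvPolynomial.coeff i P) + V.sigmaIdx i γ := Finset.inf_le hi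
    _ < _ := WithTop.add_lt_add_left (hc i hi) (V.sigmaIdx_lt_v_sMonomial_sub i ha hab)

end VDF

/-- if `v (b - a) > v a` (with `v a = γ`), then `a` is regular for the
σ-polynomial `F` iff `b` is regular for `F` (note `v b = v a = γ`). -/
theorem stmt5 {K : Type*} [Field K] {Γ : Type*} [AddCommGroup Γ] [LinearOrder Γ] [IsOrderedAddMonoid Γ]
    (V : VDF K Γ) (n : ℕ) (P : MvPolynomial (Fin (n + 1)) K) (a b : K) (γ : Γ)
    (ha : V.v a = (γ : WithTop Γ)) (hab : V.v a < V.v (b - a)) :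
    V.v (V.sEval P a) = V.Fv P γ ↔ V.v (V.sEval P b) = V.Fv P γ := by
  rcases eq_or_ne P 0 with rfl | hP
  · simp [VDF.sEval, VDF.Fv]
  · exact V.v_eq_iff_of_lt_v_sub (V.Fv_lt_v_sEval_sub hP ha hab)
end
end

section
/- Let k ⊆ k' be an extension of difference fields and g(x) a nonzero σ-polynomial over k'. Then there exists a nonzero σ-polynomial f(x) over k such that for every y ∈ k, f(y) ≠ 0 implies g(y) ≠ 0. -/
/-!
Pick a coefficient `c` of `g` that is nonzero and a `k`-linear functional `φ : k' → k` with
`φ c ≠ 0`. Applying `φ` to the coefficients of `g` gives a nonzero `f` over `k`, and since `φ`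
is `k`-linear, `f(y) = φ (g(y))` for every point `y` with coordinates in `k`. The difference
structure enters only through `σ'^[j] ∘ ι = ι ∘ σ^[j]`, which makes the `σ`-prolongation of
`y ∈ k` a point of `k'` with coordinates in `k`.
-/

namespace MvPolynomial

variable {k A σ : Type*}

theorem eval_map_linearMap [CommSemiring k] [CommSemiring A] [Algebra k A] (φ : A →ₗ[k] k)
    (x : σ → k) (P : MvPolynomial σ A) :
    eval x (AddMonoidAlgebra.map φ.toAddMonoidHom P) = φ (eval (algebraMap k A ∘ x) P) := by
  induction P using induction_on' with
  | monomial m a =>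
    rw [← single_eq_monomial, AddMonoidAlgebra.map_single, single_eq_monomial,
      single_eq_monomial, eval_monomial, eval_monomial]
    simp only [Function.comp_apply, ← map_pow, ← map_finsuppProd, mul_comm a,
      ← Algebra.smul_def, map_smul, smul_eq_mul]
    exact mul_comm _ _
  | add P Q hP hQ =>
    simp only [AddMonoidAlgebra.map_add, map_add, hP, hQ]

theorem exists_ne_zero_forall_eval_ne_zero [Field k] [CommRing A] [Algebra k A]
    {P : MvPolynomial σ A} (hP : P ≠ 0) :
    ∃ Q : MvPolynomial σ k, Q ≠ 0 ∧
      ∀ x : σ → k, eval x Q ≠ 0 → eval (algebraMap k A ∘ x) P ≠ 0 := by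
  obtain ⟨m, hm⟩ := ne_zero_iff.mp hP
  obtain ⟨φ, hφ⟩ : ∃ φ : Module.Dual k A, φ (coeff m P) ≠ 0 := by
    simpa using mt (Module.forall_dual_apply_eq_zero_iff k (coeff m P)).mp hm
  refine ⟨AddMonoidAlgebra.map φ.toAddMonoidHom P, ne_zero_iff.mpr ⟨m, hφ⟩,
    fun x hx hPx => hx (by rw [eval_map_linearMap, hPx, map_zero])⟩

end MvPolynomial

/-- let `k ⊆ k'` be an extension of difference fields (embedding `ι`
commuting with the distinguished automorphisms) and `g` a nonzero σ-polynomial over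
`k'` (encoded as a polynomial `P` in `x, σ(x), …, σ^n(x)`). Then there is a nonzero
σ-polynomial `f` over `k` such that for every `y ∈ k`, `f(y) ≠ 0` implies `g(y) ≠ 0`. -/
theorem stmt6 {k k' : Type*} [Field k] [Field k'] (ι : k →+* k')
    (σk : k ≃+* k) (σk' : k' ≃+* k')
    (hcomm : ∀ x : k, σk' (ι x) = ι (σk x))
    (n : ℕ) (P : MvPolynomial (Fin (n + 1)) k') (hP : P ≠ 0) :
    ∃ (m : ℕ) (Q : MvPolynomial (Fin (m + 1)) k), Q ≠ 0 ∧
      ∀ y : k,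
        MvPolynomial.eval (fun j : Fin (m + 1) => (⇑σk)^[(j : ℕ)] y) Q ≠ 0 →
          MvPolynomial.eval (fun j : Fin (n + 1) => (⇑σk')^[(j : ℕ)] (ι y)) P ≠ 0 := by
  let _ : Algebra k k' := ι.toAlgebra
  obtain ⟨Q, hQ, hQP⟩ := MvPolynomial.exists_ne_zero_forall_eval_ne_zero (k := k) hP
  refine ⟨n, Q, hQ, fun y hy => ?_⟩
  have hprolong : (fun j : Fin (n + 1) => (⇑σk')^[(j : ℕ)] (ι y)) =
      algebraMap k k' ∘ fun j : Fin (n + 1) => (⇑σk)^[(j : ℕ)] y :=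
    funext fun j => (Function.Semiconj.iterate_right (f := ι) (fun x => (hcomm x).symm) j y).symm
  rw [hprolong]
  exact hQP _ hy
end

section
/- Let F be a polynomial in one variable over a nontrivially valued field (K, Γ, v) with divisible value group, let γ ∈ Γ be a tropical zero of F, and let b ∈ K with v(b) = γ. Set G(x) := Σ_{i ≥ 1} F_{(i)}(b) x^i, where F_{(i)} are the Hasse derivatives of F. Then G_v(γ) = F_v(γ). -/
/-!
With `b` of valuation `γ`, the terms of `F_v(γ)` are the valuations `v (a_i b^i)`, and
`F_(k)(b) b^k = Σ_j C(j+k, k) a_{j+k} b^{j+k}`. Since binomial coefficients have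
nonnegative valuation, every coefficient of `G` contributes at least `F_v(γ)`. Let `m` be the
largest index at which `F_v(γ)` is attained; it is positive because `γ` is a tropical zero.
In `F_(m)(b) b^m` the summand `a_m b^m` is strictly dominant, so `G` attains `F_v(γ)` at `m`. -/

noncomputable section
open scoped Classical

/-- A valued field `(K, v)` with value group `Γ` (additive, `v 0 = ⊤`). -/
structure VF (K : Type*) [Field K] (Γ : Type*) [AddCommGroup Γ] [LinearOrder Γ] [IsOrderedAddMonoid Γ] where
  v : K → WithTop Γ
  v_eq_top_iff : ∀ x : K, v x = ⊤ ↔ x = 0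
  v_one : v 1 = 0
  v_mul : ∀ x y : K, v (x * y) = v x + v y
  v_neg : ∀ x : K, v (-x) = v x
  v_add : ∀ x y : K, min (v x) (v y) ≤ v (x + y)

namespace VF

variable {K : Type*} [Field K] {Γ : Type*} [AddCommGroup Γ] [LinearOrder Γ] [IsOrderedAddMonoid Γ]

/-- The tropicalization `F_v(γ) = min_i (v (a_i) + i γ)` of a one-variable polynomial
`F = Σ_i a_i x^i` (minimum over indices with `a_i ≠ 0`). -/
def Fv1 (V : VF K Γ) (F : Polynomial K) (γ : Γ) : WithTop Γ :=
  F.support.inf fun i => V.v (F.coeff i) + ((i • γ : Γ) : WithTop Γ)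

/-- `γ` is a tropical zero of `F`: the minimum `F_v(γ)` is attained at two distinct
indices. -/
def TropZero (V : VF K Γ) (F : Polynomial K) (γ : Γ) : Prop :=
  ∃ i ∈ F.support, ∃ j ∈ F.support, i ≠ j ∧
    V.v (F.coeff i) + ((i • γ : Γ) : WithTop Γ) = V.Fv1 F γ ∧
    V.v (F.coeff j) + ((j • γ : Γ) : WithTop Γ) = V.Fv1 F γ

/-- The valuation is nontrivial. -/
def Nontriv (V : VF K Γ) : Prop := ∃ x : K, x ≠ 0 ∧ V.v x ≠ 0

end VF

namespace Polynomial

variable {R : Type*} [CommSemiring R]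

theorem coeff_sum_C_mul_X_pow (s : Finset ℕ) (c : ℕ → R) (k : ℕ) :
    (∑ i ∈ s, C (c i) * X ^ i).coeff k = if k ∈ s then c k else 0 := by
  simp only [finsetSum_coeff, coeff_C_mul_X_pow, Finset.sum_ite_eq]

theorem hasseDeriv_eval_mul_pow (F : R[X]) (k : ℕ) (b : R) :
    (hasseDeriv k F).eval b * b ^ k =
      ∑ j ∈ Finset.range (F.natDegree + 1),
        ((j + k).choose k : R) * (F.coeff (j + k) * b ^ (j + k)) := by
  have hdeg : (hasseDeriv k F).natDegree < F.natDegree + 1 :=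
    Nat.lt_succ_of_le ((natDegree_hasseDeriv_le F k).trans (Nat.sub_le _ _))
  rw [eval_eq_sum_range' hdeg, Finset.sum_mul]
  refine Finset.sum_congr rfl fun j _ => ?_
  rw [hasseDeriv_coeff, pow_add]
  ring

end Polynomial

namespace VF

variable {K : Type*} [Field K] {Γ : Type*} [AddCommGroup Γ] [LinearOrder Γ] [IsOrderedAddMonoid Γ]
  (V : VF K Γ)

theorem v_zero : V.v 0 = ⊤ := (V.v_eq_top_iff 0).2 rfl

theorem v_pow_of_eq {b : K} {γ : Γ} (hb : V.v b = γ) (n : ℕ) :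
    V.v (b ^ n) = ((n • γ : Γ) : WithTop Γ) := by
  induction n with
  | zero => simp [V.v_one]
  | succ n ih => rw [pow_succ, V.v_mul, ih, hb, succ_nsmul, WithTop.coe_add]

theorem v_natCast_nonneg (n : ℕ) : 0 ≤ V.v (n : K) := by
  induction n with
  | zero => simp [V.v_zero]
  | succ n ih =>
    push_cast
    exact (le_min ih V.v_one.ge).trans (V.v_add n 1)

theorem v_le_v_natCast_mul (n : ℕ) (x : K) : V.v x ≤ V.v (n * x) := by
  rw [V.v_mul]
  exact le_add_of_nonneg_left (V.v_natCast_nonneg n)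

theorem v_add_eq_left_of_lt {x y : K} (h : V.v x < V.v y) : V.v (x + y) = V.v x := by
  refine le_antisymm ?_ ((le_min le_rfl h.le).trans (V.v_add x y))
  by_contra! hlt
  have hx := V.v_add (x + y) (-y)
  rw [add_neg_cancel_right, V.v_neg] at hx
  exact hx.not_gt (lt_min hlt h)

theorem inf_v_le_v_sum {ι : Type*} (s : Finset ι) (f : ι → K) :
    s.inf (fun i => V.v (f i)) ≤ V.v (∑ i ∈ s, f i) := by
  induction s using Finset.induction_on with
  | empty => simp [V.v_zero]
  | insert a s ha ih =>
    rw [Finset.sum_insert ha, Finset.inf_insert]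
    exact (min_le_min_left _ ih).trans (V.v_add _ _)

theorem v_add_sum_of_lt {ι : Type*} {x : K} {s : Finset ι} {f : ι → K}
    (h : ∀ i ∈ s, V.v x < V.v (f i)) : V.v (x + ∑ i ∈ s, f i) = V.v x := by
  rcases s.eq_empty_or_nonempty with rfl | hs
  · simp
  refine V.v_add_eq_left_of_lt ?_
  calc V.v x < s.inf' hs (fun i => V.v (f i)) := (Finset.lt_inf'_iff hs).2 h
    _ = s.inf (fun i => V.v (f i)) := Finset.inf'_eq_inf hs _
    _ ≤ _ := V.inf_v_le_v_sum s f

variable {F : Polynomial K} {γ : Γ} {b : K}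

theorem Fv1_eq_inf_v_coeff_mul_pow (hb : V.v b = γ) (F : Polynomial K) :
    V.Fv1 F γ = F.support.inf fun i => V.v (F.coeff i * b ^ i) := by
  refine Finset.inf_congr rfl fun i _ => ?_
  rw [V.v_mul, V.v_pow_of_eq hb]

theorem Fv1_le_v_coeff_mul_pow (hb : V.v b = γ) (i : ℕ) :
    V.Fv1 F γ ≤ V.v (F.coeff i * b ^ i) := by
  rw [V.Fv1_eq_inf_v_coeff_mul_pow hb]
  by_cases hi : i ∈ F.support
  · exact Finset.inf_le (f := fun i => V.v (F.coeff i * b ^ i)) hi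
  · rw [Polynomial.notMem_support_iff.1 hi, zero_mul, V.v_zero]
    exact le_top

theorem Fv1_le_v_hasseDeriv_eval_mul_pow (hb : V.v b = γ) (k : ℕ) :
    V.Fv1 F γ ≤ V.v ((Polynomial.hasseDeriv k F).eval b * b ^ k) := by
  rw [Polynomial.hasseDeriv_eval_mul_pow]
  refine le_trans (Finset.le_inf fun j _ => ?_) (V.inf_v_le_v_sum _ _)
  exact (V.Fv1_le_v_coeff_mul_pow hb (j + k)).trans (V.v_le_v_natCast_mul _ _)

theorem v_hasseDeriv_eval_mul_pow_of_lt {m : ℕ}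
    (h : ∀ i, m < i → V.v (F.coeff m * b ^ m) < V.v (F.coeff i * b ^ i)) :
    V.v ((Polynomial.hasseDeriv m F).eval b * b ^ m) = V.v (F.coeff m * b ^ m) := by
  rw [Polynomial.hasseDeriv_eval_mul_pow, Finset.sum_range_succ', zero_add, Nat.choose_self,
    Nat.cast_one, one_mul, add_comm]
  refine V.v_add_sum_of_lt fun j _ => ?_
  exact (h (j + 1 + m) (by omega)).trans_le (V.v_le_v_natCast_mul _ _)

theorem ne_zero_of_v_eq (hb : V.v b = γ) : b ≠ 0 := by
  rintro rfl
  exact WithTop.top_ne_coe (V.v_zero ▸ hb)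

theorem exists_last_index_of_tropZero (htz : V.TropZero F γ) (hb : V.v b = γ) :
    ∃ m, 1 ≤ m ∧ F.coeff m * b ^ m ≠ 0 ∧ V.v (F.coeff m * b ^ m) = V.Fv1 F γ ∧
      ∀ i, m < i → V.Fv1 F γ < V.v (F.coeff i * b ^ i) := by
  obtain ⟨i₀, hi₀, j₀, hj₀, hij, hi₀min, hj₀min⟩ := htz
  simp only [← V.v_pow_of_eq hb, ← V.v_mul] at hi₀min hj₀min
  set S := F.support.filter fun i => V.v (F.coeff i * b ^ i) = V.Fv1 F γ
  have hi₀S : i₀ ∈ S := Finset.mem_filter.2 ⟨hi₀, hi₀min⟩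
  have hj₀S : j₀ ∈ S := Finset.mem_filter.2 ⟨hj₀, hj₀min⟩
  set m := S.max' ⟨i₀, hi₀S⟩
  obtain ⟨hm, hmin⟩ := Finset.mem_filter.1 (S.max'_mem ⟨i₀, hi₀S⟩)
  have hcm : F.coeff m * b ^ m ≠ 0 :=
    mul_ne_zero (Polynomial.mem_support_iff.1 hm) (pow_ne_zero _ (V.ne_zero_of_v_eq hb))
  refine ⟨m, ?_, hcm, hmin, fun i hi => ?_⟩
  · have := S.le_max' _ hi₀S
    have := S.le_max' _ hj₀S
    omega
  refine (V.Fv1_le_v_coeff_mul_pow hb i).lt_of_ne fun heq => hi.not_ge (S.le_max' _ ?_)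
  refine Finset.mem_filter.2 ⟨Polynomial.mem_support_iff.2 fun hci => hcm ?_, heq.symm⟩
  rw [← V.v_eq_top_iff, hmin, heq, hci, zero_mul, V.v_zero]

end VF

theorem stmt13_general {K : Type*} [Field K] {Γ : Type*} [AddCommGroup Γ] [LinearOrder Γ] [IsOrderedAddMonoid Γ]
    (V : VF K Γ)
    (F : Polynomial K) (γ : Γ) (htz : V.TropZero F γ)
    (b : K) (hb : V.v b = (γ : WithTop Γ)) :
    V.Fv1 (∑ i ∈ Finset.Icc 1 F.natDegree,
        Polynomial.C ((Polynomial.hasseDeriv i F).eval b) * Polynomial.X ^ i) γ =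
      V.Fv1 F γ := by
  obtain ⟨m, hm1, hcm, hmin, hlast⟩ := V.exists_last_index_of_tropZero htz hb
  have hmI : m ∈ Finset.Icc 1 F.natDegree :=
    Finset.mem_Icc.2 ⟨hm1, Polynomial.le_natDegree_of_ne_zero (left_ne_zero_of_mul hcm)⟩
  have hvm : V.v ((Polynomial.hasseDeriv m F).eval b * b ^ m) = V.Fv1 F γ :=
    (V.v_hasseDeriv_eval_mul_pow_of_lt fun i hi => hmin.trans_lt (hlast i hi)).trans hmin
  have hGm : (Polynomial.hasseDeriv m F).eval b ≠ 0 := by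
    refine left_ne_zero_of_mul (b := b ^ m) fun h => hcm ?_
    rw [← V.v_eq_top_iff, hmin, ← hvm, h, V.v_zero]
  rw [V.Fv1_eq_inf_v_coeff_mul_pow hb]
  simp only [Polynomial.coeff_sum_C_mul_X_pow]
  refine le_antisymm ?_ (Finset.le_inf fun k _ => ?_)
  · refine (Finset.inf_le (b := m) ?_).trans_eq ?_
    · rwa [Polynomial.mem_support_iff, Polynomial.coeff_sum_C_mul_X_pow, if_pos hmI]
    · rw [if_pos hmI, hvm]
  · split_ifs
    · exact V.Fv1_le_v_hasseDeriv_eval_mul_pow hb k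
    · rw [zero_mul, V.v_zero]
      exact le_top

/-- let `F` be a one-variable polynomial over a nontrivially valued
field with divisible value group, `γ` a tropical zero of `F`, and `b` of valuation
`γ`. With `G(x) = Σ_{i ≥ 1} F_(i)(b) x^i` (Hasse derivatives), `G_v(γ) = F_v(γ)`. -/
theorem stmt13 {K : Type*} [Field K] {Γ : Type*} [AddCommGroup Γ] [LinearOrder Γ] [IsOrderedAddMonoid Γ]
    (V : VF K Γ) (hnt : V.Nontriv)
    (hdiv : ∀ (γ : Γ) (m : ℕ), 0 < m → ∃ δ : Γ, m • δ = γ)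
    (F : Polynomial K) (γ : Γ) (htz : V.TropZero F γ)
    (b : K) (hb : V.v b = (γ : WithTop Γ)) :
    V.Fv1 (∑ i ∈ Finset.Icc 1 F.natDegree,
        Polynomial.C ((Polynomial.hasseDeriv i F).eval b) * Polynomial.X ^ i) γ =
      V.Fv1 F γ :=
  stmt13_general V F γ htz b hb
end
end
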